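/- Let Υ be a path connection on G satisfying the reparametrization law. Then C_Υ(G) is a wide subgroupoid of G: it contains the identity morphism 1_x for every x ∈ X, and it is closed under composition and under inversion. -/

import Mathlib

/-!
Write `Υ.transport p` for the morphism `Υ^p(1)` of a path `p`, so that `C_Υ(G)` consists of
the transports along paths. The reparametrization law, applied to the affine diffeomorphisms
of `[0,1]` onto its two halves, turns the transport along a concatenation `p.trans q` into the
composite of the transports along `p` and `q`; applied to `t ↦ 1 - t` it shows that the
transport along the reversed path is an inverse. Both use `Υ^λ(0) = 1`, which is the law for
the identity diffeomorphism. Finally the constant path is its own concatenation, so its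
transport is an idempotent of the groupoid, hence an identity.
-/

open CategoryTheory

noncomputable section

/-- A (smooth) diffeomorphism `ψ : [0,1] → [t₀,t₁] ⊆ [0,1]`, orientation preserving or
reversing: a smooth real function mapping `[0,1]` bijectively onto `[t₀,t₁]` with nowhere
vanishing derivative on `[0,1]`. -/
structure IntervalDiffeo (t₀ t₁ : unitInterval) : Type where
  toFun : ℝ → ℝ
  smooth : ContDiff ℝ (⊤ : ℕ∞) toFun
  bijOn : Set.BijOn toFun (Set.Icc (0 : ℝ) 1) (Set.Icc (t₀ : ℝ) (t₁ : ℝ))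
  deriv_ne : ∀ t ∈ Set.Icc (0 : ℝ) 1, deriv toFun t ≠ 0

/-- `ψ`, viewed as a map `[0,1] → [0,1]`. -/
def IntervalDiffeo.restrict {t₀ t₁ : unitInterval} (ψ : IntervalDiffeo t₀ t₁)
    (t : unitInterval) : unitInterval :=
  ⟨ψ.toFun t, le_trans t₀.2.1 (ψ.bijOn.mapsTo t.2).1, le_trans (ψ.bijOn.mapsTo t.2).2 t₁.2.2⟩

/-- The reparametrized path `λ ∘ ψ`. -/
def IntervalDiffeo.reparam {X : Type*} [TopologicalSpace X] {t₀ t₁ : unitInterval}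
    (ψ : IntervalDiffeo t₀ t₁) (lam : C(unitInterval, X)) : C(unitInterval, X) :=
  ⟨fun t => lam (ψ.restrict t),
    lam.continuous.comp ((ψ.smooth.continuous.comp continuous_subtype_val).subtype_mk _)⟩

/-- A path connection on a groupoid `G` with object space `X`: it assigns to each
(continuous) path `λ` in `X` and each `t ∈ [0,1]` a morphism `Υ^λ(t) : λ(0) ⟶ λ(t)`. -/
def PathConnection (X : Type*) [TopologicalSpace X] [Groupoid X] :=
  ∀ (lam : C(unitInterval, X)) (t : unitInterval), lam 0 ⟶ lam t

/-- The reparametrization law: for every path `λ`, all `0 ≤ t₀ < t₁ ≤ 1` and every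
diffeomorphism `ψ : [0,1] → [t₀,t₁]`, one has `Υ^λ(ψ(t)) = Υ^{λ∘ψ}(t) ∘ Υ^λ(ψ(0))`
(where, following the convention `h·g : x ⟶ z` for `g : x ⟶ y`, `h : y ⟶ z`, the
right-hand side is `Υ^λ(ψ(0)) ≫ Υ^{λ∘ψ}(t)` in categorical notation). -/
def ReparamLaw {X : Type*} [TopologicalSpace X] [Groupoid X] (Υ : PathConnection X) : Prop :=
  ∀ (lam : C(unitInterval, X)) (t₀ t₁ : unitInterval), t₀ < t₁ →
    ∀ (ψ : IntervalDiffeo t₀ t₁) (t : unitInterval),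
      Υ lam (ψ.restrict t) = Υ lam (ψ.restrict 0) ≫ Υ (ψ.reparam lam) t

/-- `C_Υ(G) x y`: the set of morphisms `g : x ⟶ y` of the form `g = Υ^λ(1)` for some path
`λ` from `x` to `y` (the identifications of the endpoints being made by `eqToHom`). -/
def CUps {X : Type*} [TopologicalSpace X] [Groupoid X] (Υ : PathConnection X) (x y : X) :
    Set (x ⟶ y) :=
  {g | ∃ (lam : C(unitInterval, X)) (h0 : lam 0 = x) (h1 : lam 1 = y),
      g = eqToHom h0.symm ≫ Υ lam 1 ≫ eqToHom h1}

open unitInterval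

def unitInterval.half : I := ⟨1 / 2, by norm_num, by norm_num⟩

lemma unitInterval.zero_lt_half : (0 : I) < half := Subtype.coe_lt_coe.1 (by norm_num [half])

lemma unitInterval.half_lt_one : half < 1 := Subtype.coe_lt_coe.1 (by norm_num [half])

namespace IntervalDiffeo

variable {t₀ t₁ : I}

@[simp]
lemma reparam_apply {X : Type*} [TopologicalSpace X] (ψ : IntervalDiffeo t₀ t₁)
    (lam : C(I, X)) (t : I) : ψ.reparam lam t = lam (ψ.restrict t) := rfl

def affine (h : t₀ < t₁) : IntervalDiffeo t₀ t₁ where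
  toFun t := (t₁ - t₀ : ℝ) * t + t₀
  smooth := by fun_prop
  bijOn := by
    have hpos : (0 : ℝ) < t₁ - t₀ := sub_pos.2 h
    convert ((strictMono_mul_left_of_pos hpos).add_const (t₀ : ℝ)).injective.injOn.bijOn_image
      (s := Set.Icc 0 1) using 1
    rw [Set.image_affine_Icc' hpos]
    simp
  deriv_ne _ _ := by simp [sub_ne_zero.2 (Subtype.coe_lt_coe.2 h).ne']

@[simp]
lemma coe_affine_restrict (h : t₀ < t₁) (t : I) :
    ((affine h).restrict t : ℝ) = (t₁ - t₀ : ℝ) * t + t₀ := rfl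

lemma affine_restrict_zero (h : t₀ < t₁) : (affine h).restrict 0 = t₀ := by
  ext; simp

lemma affine_restrict_one (h : t₀ < t₁) : (affine h).restrict 1 = t₁ := by
  ext; simp

lemma affine_zero_one_restrict (t : I) : (affine zero_lt_one).restrict t = t := by
  ext; simp

def reverse (ψ : IntervalDiffeo t₀ t₁) : IntervalDiffeo t₀ t₁ where
  toFun t := ψ.toFun (1 - t)
  smooth := ψ.smooth.comp (contDiff_const.sub contDiff_id)
  bijOn := by
    refine ψ.bijOn.comp ?_
    convert (sub_right_injective (b := (1 : ℝ))).injOn.bijOn_image (s := Set.Icc 0 1) using 1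
    rw [Set.image_const_sub_Icc]
    simp
  deriv_ne t ht := by
    rw [deriv_comp_const_sub, neg_ne_zero]
    exact ψ.deriv_ne _ ⟨sub_nonneg.2 ht.2, sub_le_self _ ht.1⟩

lemma reverse_restrict (ψ : IntervalDiffeo t₀ t₁) (t : I) :
    ψ.reverse.restrict t = ψ.restrict (σ t) := rfl

lemma reverse_restrict_zero (ψ : IntervalDiffeo t₀ t₁) :
    ψ.reverse.restrict 0 = ψ.restrict 1 := by
  rw [reverse_restrict, symm_zero]

lemma reverse_restrict_one (ψ : IntervalDiffeo t₀ t₁) :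
    ψ.reverse.restrict 1 = ψ.restrict 0 := by
  rw [reverse_restrict, symm_one]

lemma affine_zero_one_reparam {X : Type*} [TopologicalSpace X] (lam : C(I, X)) :
    (affine zero_lt_one).reparam lam = lam := by
  ext; simp [affine_zero_one_restrict]

section Path

variable {X : Type*} [TopologicalSpace X] {x y z : X}

lemma affine_reparam_trans_left (p : Path x y) (q : Path y z) :
    (affine unitInterval.zero_lt_half).reparam (p.trans q).toContinuousMap = p.toContinuousMap := by
  ext t
  have ht : ((affine unitInterval.zero_lt_half).restrict t : ℝ) = t / 2 := by
    rw [coe_affine_restrict]; norm_num [half]; ring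
  rw [reparam_apply, Path.coe_toContinuousMap, ← Path.extend_extends', ht,
    Path.extend_trans_of_le_half _ _ (by linarith [t.2.2]), mul_div_cancel₀ _ two_ne_zero,
    Path.extend_extends']
  rfl

lemma affine_reparam_trans_right (p : Path x y) (q : Path y z) :
    (affine unitInterval.half_lt_one).reparam (p.trans q).toContinuousMap = q.toContinuousMap := by
  ext t
  have ht : ((affine unitInterval.half_lt_one).restrict t : ℝ) = t / 2 + 1 / 2 := by
    rw [coe_affine_restrict]; norm_num [half]; ring
  rw [reparam_apply, Path.coe_toContinuousMap, ← Path.extend_extends', ht,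
    Path.extend_trans_of_half_le _ _ (by linarith [t.2.1]),
    show 2 * ((t : ℝ) / 2 + 1 / 2) - 1 = t by ring, Path.extend_extends']
  rfl

lemma affine_reverse_reparam (p : Path x y) :
    (affine zero_lt_one).reverse.reparam p.toContinuousMap = p.symm.toContinuousMap := by
  ext t
  simp [reverse_restrict, affine_zero_one_restrict]

end Path

end IntervalDiffeo

namespace PathConnection

variable {X : Type*} [TopologicalSpace X] [Groupoid X] (Υ : PathConnection X)

def transport {x y : X} (p : Path x y) : x ⟶ y :=
  eqToHom p.source.symm ≫ Υ p.toContinuousMap 1 ≫ eqToHom p.target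

lemma mem_CUps_iff {x y : X} {g : x ⟶ y} :
    g ∈ CUps Υ x y ↔ ∃ p : Path x y, Υ.transport p = g :=
  ⟨fun ⟨lam, h₀, h₁, hg⟩ => ⟨⟨lam, h₀, h₁⟩, hg.symm⟩,
    fun ⟨p, hp⟩ => ⟨p.toContinuousMap, p.source, p.target, hp.symm⟩⟩

end PathConnection

namespace ReparamLaw

open IntervalDiffeo

variable {X : Type*} [TopologicalSpace X] [Groupoid X] {Υ : PathConnection X}

lemma apply_eq_comp_transport (hΥ : ReparamLaw Υ) {lam : C(I, X)} {t₀ t₁ : I}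
    (h : t₀ < t₁) (ψ : IntervalDiffeo t₀ t₁) {a b : I}
    (ha : ψ.restrict 0 = a) (hb : ψ.restrict 1 = b)
    {x y : X} (p : Path x y) (hp : ψ.reparam lam = p.toContinuousMap)
    (hx : lam a = x) (hy : y = lam b) :
    Υ lam b = Υ lam a ≫ eqToHom hx ≫ Υ.transport p ≫ eqToHom hy := by
  subst ha hb
  obtain ⟨mu, rfl, rfl⟩ := p
  subst hp
  rw [hΥ lam t₀ t₁ h ψ 1]
  -- `ψ.reparam lam t` unfolds to `lam (ψ.restrict t)`, so all four `eqToHom`s are identities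
  change _ = _ ≫ 𝟙 _ ≫ (𝟙 _ ≫ Υ (ψ.reparam lam) 1 ≫ 𝟙 _) ≫ 𝟙 _
  simp only [Category.id_comp, Category.comp_id]
  rfl

lemma apply_zero (hΥ : ReparamLaw Υ) (lam : C(I, X)) : Υ lam 0 = 𝟙 (lam 0) := by
  have h := hΥ.apply_eq_comp_transport zero_lt_one (affine zero_lt_one)
    (affine_restrict_zero _) (affine_restrict_one _)
    ⟨lam, rfl, rfl⟩ (affine_zero_one_reparam lam) rfl rfl
  simp only [PathConnection.transport, eqToHom_refl, Category.id_comp, Category.comp_id] at h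
  exact (cancel_mono (Υ lam 1)).1 (by simpa using h.symm)

variable {x y z : X}

lemma transport_trans (hΥ : ReparamLaw Υ) (p : Path x y) (q : Path y z) :
    Υ.transport (p.trans q) = Υ.transport p ≫ Υ.transport q := by
  have hmid : (p.trans q) half = y := by
    have h := DFunLike.congr_fun (affine_reparam_trans_left p q) 1
    rw [reparam_apply, affine_restrict_one] at h
    exact h.trans p.target
  have h₁ := hΥ.apply_eq_comp_transport unitInterval.zero_lt_half _ (affine_restrict_zero _)
    (affine_restrict_one _) p (affine_reparam_trans_left p q)
    (p.trans q).source hmid.symm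
  have h₂ := hΥ.apply_eq_comp_transport unitInterval.half_lt_one _
    (affine_restrict_zero _) (affine_restrict_one _) q
    (affine_reparam_trans_right p q) hmid (p.trans q).target.symm
  simp [PathConnection.transport, h₂, h₁, hΥ.apply_zero]

lemma transport_refl (hΥ : ReparamLaw Υ) (x : X) : Υ.transport (Path.refl x) = 𝟙 x := by
  have h := hΥ.transport_trans (Path.refl x) (Path.refl x)
  rw [Path.refl_trans_refl] at h
  exact (cancel_mono (Υ.transport (Path.refl x))).1 (by simpa using h.symm)

lemma transport_comp_transport_symm (hΥ : ReparamLaw Υ) (p : Path x y) :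
    Υ.transport p ≫ Υ.transport p.symm = 𝟙 x := by
  have h := hΥ.apply_eq_comp_transport zero_lt_one (affine zero_lt_one).reverse
    ((reverse_restrict_zero _).trans (affine_restrict_one _))
    ((reverse_restrict_one _).trans (affine_restrict_zero _))
    p.symm (affine_reverse_reparam p) p.target p.source.symm
  rw [hΥ.apply_zero] at h
  have h' := h.symm =≫ eqToHom p.source
  simp only [Category.assoc, eqToHom_trans, eqToHom_refl, Category.comp_id, Category.id_comp] at h'
  rw [PathConnection.transport, Category.assoc, Category.assoc, h']
  simp

lemma transport_symm (hΥ : ReparamLaw Υ) (p : Path x y) :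
    Υ.transport p.symm = Groupoid.inv (Υ.transport p) := by
  rw [Groupoid.inv_eq_inv]
  exact IsIso.eq_inv_of_hom_inv_id (hΥ.transport_comp_transport_symm p)

end ReparamLaw

/-- `C_Υ(G)` is a wide subgroupoid of `G`. -/
theorem CUps_wide_subgroupoid {X : Type*} [TopologicalSpace X] [Groupoid X]
    (Υ : PathConnection X) (hΥ : ReparamLaw Υ) :
    (∀ x : X, 𝟙 x ∈ CUps Υ x x) ∧
    (∀ (x y z : X) (g : x ⟶ y) (h : y ⟶ z),
        g ∈ CUps Υ x y → h ∈ CUps Υ y z → g ≫ h ∈ CUps Υ x z) ∧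
    (∀ (x y : X) (g : x ⟶ y), g ∈ CUps Υ x y → Groupoid.inv g ∈ CUps Υ y x) := by
  simp only [PathConnection.mem_CUps_iff]
  refine ⟨fun x => ⟨Path.refl x, hΥ.transport_refl x⟩, ?_, ?_⟩
  · rintro x y z _ _ ⟨p, rfl⟩ ⟨q, rfl⟩
    exact ⟨p.trans q, hΥ.transport_trans p q⟩
  · rintro x y _ ⟨p, rfl⟩
    exact ⟨p.symm, hΥ.transport_symm p⟩

end
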